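/- Suppose w₀ ∈ ℝ is such that (w₀, β(w₀)) ∈ C^u_i ∩ C^d_j for some 1 ≤ i ≤ N_u and 1 ≤ j ≤ N_d. Then the left derivative of V at w₀ satisfies V'⁻(w₀) = min{ ((1 − p)/(1 − q))·g'⁻(x^d_j), (p/q)·f'⁻(x^u_i) }, where q = (R − d)/(u − d). -/

import Mathlib

/-- `f` is affine on the set `s`. -/
def AffOn (f : ℝ → ℝ) (s : Set ℝ) : Prop := ∃ a c : ℝ, ∀ y ∈ s, f y = a * y + c

/-- Left derivative of `f` at `x`. -/
noncomputable def lDeriv (f : ℝ → ℝ) (x : ℝ) : ℝ := derivWithin f (Set.Iio x) x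

/-- Right derivative of `f` at `x`. -/
noncomputable def rDeriv (f : ℝ → ℝ) (x : ℝ) : ℝ := derivWithin f (Set.Ioi x) x

/-- `f` is piecewise affine with partition points `x 1 < x 2 < … < x N`
(no partition points if `N = 0`, in which case `f` is affine on all of `ℝ`). -/
def PWAff (f : ℝ → ℝ) (N : ℕ) (x : ℕ → ℝ) : Prop :=
  (∀ i, 1 ≤ i → i + 1 ≤ N → x i < x (i + 1)) ∧
  (N = 0 → AffOn f Set.univ) ∧
  (1 ≤ N → AffOn f (Set.Iic (x 1)) ∧ AffOn f (Set.Ici (x N)) ∧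
    ∀ i, 1 ≤ i → i + 1 ≤ N → AffOn f (Set.Icc (x i) (x (i + 1))))

/-- `f` belongs to class `H` as witnessed by the points `x 1 < … < x N`:
piecewise linear, concave on `ℝ`, and eventually constant. -/
def ClassHAux (f : ℝ → ℝ) (N : ℕ) (x : ℕ → ℝ) : Prop :=
  PWAff f N x ∧ ConcaveOn ℝ Set.univ f ∧ ∃ xb : ℝ, ∀ y, xb ≤ y → f y = f xb

/-- `f` belongs to class `H`. -/
def ClassH (f : ℝ → ℝ) : Prop := ∃ N x, ClassHAux f N x

/-- `x 1 < … < x N` are the singular values of the class-`H` function `f`: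
they partition `ℝ` into pieces on which `f` is affine and each of them is a genuine
kink, i.e. the right derivative is strictly smaller than the left derivative there. -/
def HasSingVals (f : ℝ → ℝ) (N : ℕ) (x : ℕ → ℝ) : Prop :=
  ClassHAux f N x ∧ ∀ i, 1 ≤ i → i ≤ N → rDeriv f (x i) < lDeriv f (x i)

/-- The dynamic-programming objective
`H(w,b) = R⁻¹ (p f(wR + b(u−R)) + (1−p) g(wR + b(d−R)))`. -/
noncomputable def Hfun (R u d p : ℝ) (f g : ℝ → ℝ) (w b : ℝ) : ℝ :=
  R⁻¹ * (p * f (w * R + b * (u - R)) + (1 - p) * g (w * R + b * (d - R)))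

/-- The value function `V(w) = sup_b H(w,b)`. -/
noncomputable def Vfun (R u d p : ℝ) (f g : ℝ → ℝ) (w : ℝ) : ℝ :=
  ⨆ b : ℝ, Hfun R u d p f g w b

/-- The set of maximizers `B(w) = {b : H(w,b) = V(w)}`. -/
noncomputable def Bset (R u d p : ℝ) (f g : ℝ → ℝ) (w : ℝ) : Set ℝ :=
  {b : ℝ | Hfun R u d p f g w b = Vfun R u d p f g w}

/-- The minimal optimal strategy `β(w) = min B(w)`. -/
noncomputable def betaFun (R u d p : ℝ) (f g : ℝ → ℝ) (w : ℝ) : ℝ :=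
  sInf (Bset R u d p f g w)

/-- The grid line `C^u = {(w,b) : wR + b(u−R) = c}`. -/
def Cu (R u : ℝ) (c : ℝ) : Set (ℝ × ℝ) := {pt | pt.1 * R + pt.2 * (u - R) = c}

/-- The grid line `C^d = {(w,b) : wR + b(d−R) = c}`. -/
def Cd (R d : ℝ) (c : ℝ) : Set (ℝ × ℝ) := {pt | pt.1 * R + pt.2 * (d - R) = c}

/-- The grid `G`, the union of the lines `C^u_i`, `1 ≤ i ≤ Nu`, and `C^d_j`, `1 ≤ j ≤ Nd`. -/
def Grid (R u d : ℝ) (Nu : ℕ) (xu : ℕ → ℝ) (Nd : ℕ) (xd : ℕ → ℝ) : Set (ℝ × ℝ) :=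
  (⋃ i ∈ Finset.Icc 1 Nu, Cu R u (xu i)) ∪ (⋃ j ∈ Finset.Icc 1 Nd, Cd R d (xd j))

/-- The open parallelogram `D_ij`, for `0 ≤ i ≤ Nu`, `0 ≤ j ≤ Nd`, with the conventions
`x^u_0 = x^d_0 = −∞` and `x^u_{Nu+1} = x^d_{Nd+1} = +∞`. -/
def Dset (R u d : ℝ) (Nu : ℕ) (xu : ℕ → ℝ) (Nd : ℕ) (xd : ℕ → ℝ) (i j : ℕ) : Set (ℝ × ℝ) :=
  {pt | (1 ≤ i → xu i < pt.1 * R + pt.2 * (u - R)) ∧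
        (i < Nu → pt.1 * R + pt.2 * (u - R) < xu (i + 1)) ∧
        (1 ≤ j → xd j < pt.1 * R + pt.2 * (d - R)) ∧
        (j < Nd → pt.1 * R + pt.2 * (d - R) < xd (j + 1))}

/-!
In the coordinates `ξ = wR + b(u - R)`, `η = wR + b(d - R)`, which satisfy
`qξ + (1 - q)η = wR`, and after rescaling `f`, `g` to `F = (p/q) f`, `G = ((1-p)/(1-q)) g`,
`R V(w)` is the supremum of `q F(ξ) + (1 - q) G(η)` over the line `qξ + (1 - q)η = wR`.
Optimality of the kink pair `(x^u_i, x^d_j)` on its line forces the right slope of each of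
`F`, `G` below the left slope of the other, so `s = min (G'⁻, F'⁻)` is a common supergradient
of `F` and `G` at the kinks; this bounds `V(w)` by `V(w₀) + s (w - w₀)` for all `w`.
For `w` slightly below `w₀`, keeping one coordinate at its kink and moving the other into its
left affine piece attains this bound, so `V` is affine with slope `s` just left of `w₀`.
-/

open Filter Set Topology

lemma hasDerivWithinAt_of_eventually_eq_affine {f : ℝ → ℝ} {s : Set ℝ} {x a : ℝ}
    (h : ∀ᶠ y in 𝓝[s] x, f y = f x + a * (y - x)) : HasDerivWithinAt f a s x := by
  have hlin : HasDerivAt (fun y => f x + a * (y - x)) a x := by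
    simpa using ((hasDerivAt_id x).sub_const x).const_mul a |>.const_add (f x)
  exact hlin.hasDerivWithinAt.congr_of_eventuallyEq h (by ring)

lemma ConcaveOn.le_add_mul_sub {f : ℝ → ℝ} {x a b γ : ℝ} (hf : ConcaveOn ℝ univ f)
    (hl : HasDerivWithinAt f a (Iio x) x) (hr : HasDerivWithinAt f b (Ioi x) x)
    (hbγ : b ≤ γ) (hγa : γ ≤ a) (y : ℝ) : f y ≤ f x + γ * (y - x) := by
  rcases lt_trichotomy y x with hyx | rfl | hxy
  · have := hf.le_slope_of_hasDerivWithinAt_Iio (mem_univ y) (mem_univ x) hyx hl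
    rw [slope_def_field, le_div_iff₀ (sub_pos.2 hyx)] at this
    linarith [mul_le_mul_of_nonneg_right hγa (sub_pos.2 hyx).le]
  · simp
  · have := hf.slope_le_of_hasDerivWithinAt_Ioi (mem_univ x) (mem_univ y) hxy hr
    rw [slope_def_field, div_le_iff₀ (sub_pos.2 hxy)] at this
    linarith [mul_le_mul_of_nonneg_right hbγ (sub_pos.2 hxy).le]

lemma ConcaveOn.right_slope_le_left_slope {f : ℝ → ℝ} {x a b : ℝ} (hf : ConcaveOn ℝ univ f)
    (hl : HasDerivWithinAt f a (Iio x) x) (hr : HasDerivWithinAt f b (Ioi x) x) : b ≤ a := by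
  have := hf.neg.leftDeriv_le_rightDeriv_of_mem_interior (x := x) (by simp)
  rw [hl.neg.derivWithin (uniqueDiffWithinAt_Iio x),
    hr.neg.derivWithin (uniqueDiffWithinAt_Ioi x)] at this
  linarith

lemma ConcaveOn.le_of_forall_ge_eq {f : ℝ → ℝ} {x₀ : ℝ} (hf : ConcaveOn ℝ univ f)
    (hc : ∀ y, x₀ ≤ y → f y = f x₀) (y : ℝ) : f y ≤ f x₀ := by
  rcases le_or_gt x₀ y with hy | hy
  · exact (hc y hy).le
  · have := hf.slope_anti_adjacent (mem_univ y) (mem_univ (x₀ + 1)) hy (lt_add_one x₀)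
    rw [hc _ (by linarith), sub_self, zero_div, le_div_iff₀ (sub_pos.2 hy)] at this
    linarith

lemma ConcaveOn.tendsto_atBot_of_lt {f : ℝ → ℝ} {y z : ℝ} (hf : ConcaveOn ℝ univ f)
    (hyz : y < z) (hlt : f y < f z) : Tendsto f atBot atBot := by
  set m := (f z - f y) / (z - y)
  have hm : 0 < m := div_pos (sub_pos.2 hlt) (sub_pos.2 hyz)
  have hbound : ∀ x < y, f x ≤ f y + m * (x - y) := fun x hx => by
    have := hf.slope_anti_adjacent (mem_univ x) (mem_univ z) hx hyz
    rw [le_div_iff₀ (sub_pos.2 hx)] at this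
    linarith
  refine tendsto_atBot_mono' _ (eventually_lt_atBot y |>.mono hbound) ?_
  exact tendsto_atBot_add_const_left _ _ <|
    (tendsto_const_mul_atBot_of_pos hm).2 (tendsto_atBot_add_const_right _ _ tendsto_id)

structure IsConcaveCorner (f : ℝ → ℝ) (x a b : ℝ) : Prop where
  concaveOn : ConcaveOn ℝ univ f
  eventually_left : ∀ᶠ y in 𝓝[<] x, f y = f x + a * (y - x)
  eventually_right : ∀ᶠ y in 𝓝[>] x, f y = f x + b * (y - x)

namespace IsConcaveCorner

variable {f : ℝ → ℝ} {x a b : ℝ}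

lemma right_le_left (h : IsConcaveCorner f x a b) : b ≤ a :=
  h.concaveOn.right_slope_le_left_slope (hasDerivWithinAt_of_eventually_eq_affine h.eventually_left)
    (hasDerivWithinAt_of_eventually_eq_affine h.eventually_right)

lemma le_add_mul_sub (h : IsConcaveCorner f x a b) {γ : ℝ} (hbγ : b ≤ γ) (hγa : γ ≤ a)
    (y : ℝ) : f y ≤ f x + γ * (y - x) :=
  h.concaveOn.le_add_mul_sub (hasDerivWithinAt_of_eventually_eq_affine h.eventually_left)
    (hasDerivWithinAt_of_eventually_eq_affine h.eventually_right) hbγ hγa y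

lemma const_mul (h : IsConcaveCorner f x a b) {c : ℝ} (hc : 0 ≤ c) :
    IsConcaveCorner (fun y => c * f y) x (c * a) (c * b) where
  concaveOn := h.concaveOn.smul hc
  eventually_left := h.eventually_left.mono fun y hy => by rw [hy]; ring
  eventually_right := h.eventually_right.mono fun y hy => by rw [hy]; ring

end IsConcaveCorner

lemma AffOn.exists_eventually_eq {f : ℝ → ℝ} {s t : Set ℝ} {x : ℝ} (h : AffOn f s)
    (hx : x ∈ s) (hs : s ∈ 𝓝[t] x) : ∃ a, ∀ᶠ y in 𝓝[t] x, f y = f x + a * (y - x) := by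
  obtain ⟨a, c, hac⟩ := h
  exact ⟨a, eventually_of_mem hs fun y hy => by rw [hac y hy, hac x hx]; ring⟩

namespace PWAff

variable {f : ℝ → ℝ} {N i : ℕ} {x : ℕ → ℝ}

lemma exists_eventually_left (h : PWAff f N x) (hi1 : 1 ≤ i) (hiN : i ≤ N) :
    ∃ a, ∀ᶠ y in 𝓝[<] x i, f y = f (x i) + a * (y - x i) := by
  obtain ⟨hmono, -, hpieces⟩ := h
  obtain ⟨hfirst, -, hmid⟩ := hpieces (hi1.trans hiN)
  obtain rfl | ⟨k, hk1, rfl⟩ : i = 1 ∨ ∃ k, 1 ≤ k ∧ i = k + 1 :=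
    (eq_or_lt_of_le hi1).imp Eq.symm fun h => ⟨i - 1, by omega, by omega⟩
  · exact hfirst.exists_eventually_eq self_mem_Iic
      (mem_of_superset self_mem_nhdsWithin Iio_subset_Iic_self)
  · exact (hmid k hk1 hiN).exists_eventually_eq (right_mem_Icc.2 (hmono k hk1 hiN).le)
      (Icc_mem_nhdsLT (hmono k hk1 hiN))

lemma exists_eventually_right (h : PWAff f N x) (hi1 : 1 ≤ i) (hiN : i ≤ N) :
    ∃ b, ∀ᶠ y in 𝓝[>] x i, f y = f (x i) + b * (y - x i) := by
  obtain ⟨hmono, -, hpieces⟩ := h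
  obtain ⟨-, hlast, hmid⟩ := hpieces (hi1.trans hiN)
  rcases eq_or_lt_of_le hiN with rfl | hiN
  · exact hlast.exists_eventually_eq self_mem_Ici
      (mem_of_superset self_mem_nhdsWithin Ioi_subset_Ici_self)
  · exact (hmid i hi1 hiN).exists_eventually_eq (left_mem_Icc.2 (hmono i hi1 hiN).le)
      (Icc_mem_nhdsGT (hmono i hi1 hiN))

end PWAff

lemma HasSingVals.isConcaveCorner {f : ℝ → ℝ} {N i : ℕ} {x : ℕ → ℝ} (hf : HasSingVals f N x)
    (hi1 : 1 ≤ i) (hiN : i ≤ N) :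
    IsConcaveCorner f (x i) (lDeriv f (x i)) (rDeriv f (x i)) := by
  obtain ⟨a, ha⟩ := hf.1.1.exists_eventually_left hi1 hiN
  obtain ⟨b, hb⟩ := hf.1.1.exists_eventually_right hi1 hiN
  have hl : lDeriv f (x i) = a :=
    (hasDerivWithinAt_of_eventually_eq_affine ha).derivWithin (uniqueDiffWithinAt_Iio _)
  have hr : rDeriv f (x i) = b :=
    (hasDerivWithinAt_of_eventually_eq_affine hb).derivWithin (uniqueDiffWithinAt_Ioi _)
  rw [hl, hr]
  exact ⟨hf.1.2.1, ha, hb⟩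

lemma ClassHAux.tendsto_atBot {f : ℝ → ℝ} {N : ℕ} {x : ℕ → ℝ} (hf : ClassHAux f N x)
    (hnc : ∃ a b : ℝ, f a ≠ f b) : Tendsto f atBot atBot := by
  obtain ⟨-, hconc, x₀, hconst⟩ := hf
  obtain ⟨y, hy⟩ : ∃ y, f y ≠ f x₀ := by
    obtain ⟨a, b, hab⟩ := hnc
    by_contra! h
    exact hab ((h a).trans (h b).symm)
  have hyx : y < x₀ := lt_of_not_ge fun h => hy (hconst y h)
  exact hconc.tendsto_atBot_of_lt hyx ((hconc.le_of_forall_ge_eq hconst y).lt_of_ne hy)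

lemma ClassHAux.continuous {f : ℝ → ℝ} {N : ℕ} {x : ℕ → ℝ} (hf : ClassHAux f N x) :
    Continuous f :=
  continuousOn_univ.1 (hf.2.1.continuousOn isOpen_univ)

lemma ClassHAux.exists_forall_le {f : ℝ → ℝ} {N : ℕ} {x : ℕ → ℝ} (hf : ClassHAux f N x) :
    ∃ M, ∀ y, f y ≤ M :=
  let ⟨x₀, hx₀⟩ := hf.2.2
  ⟨f x₀, hf.2.1.le_of_forall_ge_eq hx₀⟩

lemma tendsto_affine_nhdsWithin {s t : Set ℝ} {x y k : ℝ} (h : ∀ z ∈ s, y + k * (z - x) ∈ t) :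
    Tendsto (fun z => y + k * (z - x)) (𝓝[s] x) (𝓝[t] y) := by
  have hc : Continuous fun z => y + k * (z - x) := by fun_prop
  simpa using (hc.continuousWithinAt (s := s) (x := x)).tendsto_nhdsWithin h

section WeightedLine

variable {q r : ℝ} {F G : ℝ → ℝ} {x₁ x₂ : ℝ}

lemma right_slope_le_left_slope_of_isMax {a b : ℝ} (hq : 0 < q) (hr : 0 < r)
    (hF : ∀ᶠ z in 𝓝[>] x₁, F z = F x₁ + b * (z - x₁))
    (hG : ∀ᶠ z in 𝓝[<] x₂, G z = G x₂ + a * (z - x₂))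
    (hmax : ∀ ξ η, q * ξ + r * η = q * x₁ + r * x₂ → q * F ξ + r * G η ≤ q * F x₁ + r * G x₂) :
    b ≤ a := by
  have hqr : 0 < q / r := div_pos hq hr
  have hη : Tendsto (fun ξ => x₂ + -(q / r) * (ξ - x₁)) (𝓝[>] x₁) (𝓝[<] x₂) :=
    tendsto_affine_nhdsWithin fun ξ (hξ : x₁ < ξ) => by
      simp only [mem_Iio]; nlinarith [mul_pos hqr (sub_pos.2 hξ)]
  obtain ⟨ξ, hξ, hFξ, hGη⟩ :=
    ((eventually_mem_nhdsWithin (s := Ioi x₁)).and (hF.and (hη.eventually hG))).exists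
  have hle := hmax ξ (x₂ + -(q / r) * (ξ - x₁)) (by field_simp; ring)
  rw [hFξ, hGη] at hle
  have hrq : r * (q / r) = q := mul_div_cancel₀ q hr.ne'
  have : q * (ξ - x₁) * (b - a) ≤ 0 := by linear_combination hle + a * (ξ - x₁) * hrq
  exact sub_nonpos.1 (nonpos_of_mul_nonpos_right this (mul_pos hq (sub_pos.2 hξ)))

lemma weighted_le_add_min_mul {aF bF aG bG : ℝ} (hq : 0 < q) (hr : 0 < r)
    (hF : IsConcaveCorner F x₁ aF bF) (hG : IsConcaveCorner G x₂ aG bG)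
    (hmax : ∀ ξ η, q * ξ + r * η = q * x₁ + r * x₂ → q * F ξ + r * G η ≤ q * F x₁ + r * G x₂)
    (ξ η : ℝ) :
    q * F ξ + r * G η ≤
      q * F x₁ + r * G x₂ + min aG aF * (q * ξ + r * η - (q * x₁ + r * x₂)) := by
  have hFG : bF ≤ aG :=
    right_slope_le_left_slope_of_isMax hq hr hF.eventually_right hG.eventually_left hmax
  have hGF : bG ≤ aF := right_slope_le_left_slope_of_isMax hr hq hG.eventually_right
    hF.eventually_left fun η ξ h => by linarith [hmax ξ η (by linarith)]
  have hFξ := hF.le_add_mul_sub (le_min hFG hF.right_le_left) (min_le_right _ _) ξ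
  have hGη := hG.le_add_mul_sub (le_min hG.right_le_left hGF) (min_le_left _ _) η
  linarith [mul_le_mul_of_nonneg_left hFξ hq.le, mul_le_mul_of_nonneg_left hGη hr.le]

lemma eventually_exists_weighted_eq_of_left_slope {a : ℝ} (hr : 0 < r)
    (hG : ∀ᶠ z in 𝓝[<] x₂, G z = G x₂ + a * (z - x₂)) :
    ∀ᶠ c in 𝓝[<] (q * x₁ + r * x₂), ∃ ξ η, q * ξ + r * η = c ∧
      q * F ξ + r * G η = q * F x₁ + r * G x₂ + a * (c - (q * x₁ + r * x₂)) := by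
  have hη : Tendsto (fun c => x₂ + r⁻¹ * (c - (q * x₁ + r * x₂))) (𝓝[<] (q * x₁ + r * x₂))
      (𝓝[<] x₂) :=
    tendsto_affine_nhdsWithin fun c (hc : c < _) => by
      simp only [mem_Iio]; nlinarith [mul_pos (inv_pos.2 hr) (sub_pos.2 hc)]
  filter_upwards [hη.eventually hG] with c hc
  refine ⟨x₁, x₂ + r⁻¹ * (c - (q * x₁ + r * x₂)), by field_simp; ring, ?_⟩
  rw [hc]
  field_simp
  ring

lemma eventually_exists_weighted_eq_min {aF aG : ℝ} (hq : 0 < q) (hr : 0 < r)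
    (hF : ∀ᶠ z in 𝓝[<] x₁, F z = F x₁ + aF * (z - x₁))
    (hG : ∀ᶠ z in 𝓝[<] x₂, G z = G x₂ + aG * (z - x₂)) :
    ∀ᶠ c in 𝓝[<] (q * x₁ + r * x₂), ∃ ξ η, q * ξ + r * η = c ∧
      q * F ξ + r * G η = q * F x₁ + r * G x₂ + min aG aF * (c - (q * x₁ + r * x₂)) := by
  rcases le_total aG aF with h | h
  · rw [min_eq_left h]
    exact eventually_exists_weighted_eq_of_left_slope hr hG
  · rw [min_eq_right h, add_comm (q * x₁)]
    filter_upwards [eventually_exists_weighted_eq_of_left_slope (F := G) (q := r) hq hF]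
      with c ⟨η, ξ, hline, heq⟩
    exact ⟨ξ, η, by linarith, by linarith⟩

end WeightedLine

lemma Continuous.bddAbove_range_and_apply_sInf_eq_iSup {φ : ℝ → ℝ} (hφ : Continuous φ)
    (h : Tendsto φ (cocompact ℝ) atBot) :
    BddAbove (range φ) ∧ φ (sInf {b | φ b = ⨆ b, φ b}) = ⨆ b, φ b := by
  obtain ⟨b₀, hb₀⟩ := hφ.exists_forall_ge h
  have hbdd : BddAbove (range φ) := ⟨φ b₀, forall_mem_range.2 hb₀⟩
  have hsup : ⨆ b, φ b = φ b₀ := le_antisymm (ciSup_le hb₀) (le_ciSup hbdd b₀)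
  obtain ⟨K, hK, hsub⟩ := mem_cocompact.1 (h.eventually (eventually_lt_atBot (φ b₀)))
  have hbelow : BddBelow {b | φ b = ⨆ b, φ b} :=
    hK.bddBelow.mono fun b hb => by_contra fun hbK => (hsub hbK).ne (hb.trans hsup)
  refine ⟨hbdd, (isClosed_eq hφ continuous_const).csInf_mem ⟨b₀, hsup.symm⟩ hbelow⟩

section Model

variable {R u d p q : ℝ} {f g : ℝ → ℝ}

lemma Hfun_rescale (hq0 : q ≠ 0) (hq1 : 1 - q ≠ 0) :
    Hfun R u d p f g =
      Hfun R u d q (fun z => p / q * f z) (fun z => (1 - p) / (1 - q) * g z) := by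
  funext w b
  simp only [Hfun]
  field_simp

lemma combination_eq (hqud : q * (u - d) = R - d) (w b : ℝ) :
    q * (w * R + b * (u - R)) + (1 - q) * (w * R + b * (d - R)) = w * R := by
  linear_combination b * hqud

lemma exists_eq_of_combination_eq {w ξ η : ℝ} (hud : u ≠ d) (hqud : q * (u - d) = R - d)
    (h : q * ξ + (1 - q) * η = w * R) :
    ∃ b, w * R + b * (u - R) = ξ ∧ w * R + b * (d - R) = η := by
  have hud' : u - d ≠ 0 := sub_ne_zero.2 hud
  refine ⟨(ξ - η) / (u - d), ?_, ?_⟩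
  · field_simp
    linear_combination -(u - d) * h + (ξ - η) * hqud
  · field_simp
    linear_combination -(u - d) * h + (ξ - η) * hqud

lemma tendsto_Hfun_cocompact {Mf Mg : ℝ} (hR : 0 < R) (hdR : d < R) (hRu : R < u) (hp0 : 0 < p)
    (hp1 : p < 1) (hfM : ∀ y, f y ≤ Mf) (hgM : ∀ y, g y ≤ Mg) (hf : Tendsto f atBot atBot)
    (hg : Tendsto g atBot atBot) (w : ℝ) :
    Tendsto (Hfun R u d p f g w) (cocompact ℝ) atBot := by
  have hp1' : 0 ≤ 1 - p := by linarith
  rw [cocompact_eq_atBot_atTop, tendsto_sup]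
  refine ⟨?_, ?_⟩ <;> refine (tendsto_const_mul_atBot_of_pos (inv_pos.2 hR)).2 ?_
  · have hξ : Tendsto (fun b => w * R + b * (u - R)) atBot atBot :=
      tendsto_atBot_add_const_left _ _ ((tendsto_mul_const_atBot_of_pos (by linarith)).2 tendsto_id)
    exact tendsto_atBot_add_right_of_ge _ ((1 - p) * Mg)
      ((tendsto_const_mul_atBot_of_pos hp0).2 (hf.comp hξ))
      fun b => mul_le_mul_of_nonneg_left (hgM _) hp1'
  · have hη : Tendsto (fun b => w * R + b * (d - R)) atTop atBot :=
      tendsto_atBot_add_const_left _ _ ((tendsto_mul_const_atBot_of_neg (by linarith)).2 tendsto_id)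
    exact tendsto_atBot_add_left_of_ge _ (p * Mf)
      (fun b => mul_le_mul_of_nonneg_left (hfM _) hp0.le)
      ((tendsto_const_mul_atBot_of_pos (by linarith)).2 (hg.comp hη))

lemma bddAbove_Hfun_and_Hfun_betaFun {Nu Nd : ℕ} {xu xd : ℕ → ℝ}
    (hR : 0 < R) (hdR : d < R) (hRu : R < u) (hp0 : 0 < p) (hp1 : p < 1)
    (hf : ClassHAux f Nu xu) (hg : ClassHAux g Nd xd)
    (hfnc : ∃ a b : ℝ, f a ≠ f b) (hgnc : ∃ a b : ℝ, g a ≠ g b) (w : ℝ) :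
    BddAbove (range (Hfun R u d p f g w)) ∧
      Hfun R u d p f g w (betaFun R u d p f g w) = Vfun R u d p f g w := by
  obtain ⟨Mf, hMf⟩ := hf.exists_forall_le
  obtain ⟨Mg, hMg⟩ := hg.exists_forall_le
  have hcont : Continuous (Hfun R u d p f g w) := by
    have := hf.continuous
    have := hg.continuous
    unfold Hfun
    fun_prop
  exact hcont.bddAbove_range_and_apply_sInf_eq_iSup <| tendsto_Hfun_cocompact hR hdR hRu hp0
    hp1 hMf hMg (hf.tendsto_atBot hfnc) (hg.tendsto_atBot hgnc) w

theorem lDeriv_Vfun_eq_min {F G : ℝ → ℝ} {w₀ b₀ x₁ x₂ aF bF aG bG : ℝ}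
    (hR : 0 < R) (hud : u ≠ d) (hq0 : 0 < q) (hq1 : 0 < 1 - q) (hqud : q * (u - d) = R - d)
    (hF : IsConcaveCorner F x₁ aF bF) (hG : IsConcaveCorner G x₂ aG bG)
    (hbdd : ∀ w, BddAbove (range (Hfun R u d q F G w)))
    (hb₀ : Hfun R u d q F G w₀ b₀ = Vfun R u d q F G w₀)
    (h₁ : w₀ * R + b₀ * (u - R) = x₁) (h₂ : w₀ * R + b₀ * (d - R) = x₂) :
    lDeriv (Vfun R u d q F G) w₀ = min aG aF := by
  have hc₀ : q * x₁ + (1 - q) * x₂ = w₀ * R := h₁ ▸ h₂ ▸ combination_eq hqud w₀ b₀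
  have hmax : ∀ ξ η, q * ξ + (1 - q) * η = q * x₁ + (1 - q) * x₂ →
      q * F ξ + (1 - q) * G η ≤ q * F x₁ + (1 - q) * G x₂ := by
    intro ξ η h
    obtain ⟨b, rfl, rfl⟩ := exists_eq_of_combination_eq hud hqud (h.trans hc₀)
    rw [← h₁, ← h₂]
    exact le_of_mul_le_mul_left ((le_ciSup (hbdd w₀) b).trans hb₀.ge) (inv_pos.2 hR)
  have hlow := eventually_exists_weighted_eq_min hq0 hq1 hF.eventually_left hG.eventually_left
  rw [hc₀] at hlow
  have hwR : Tendsto (fun w => w₀ * R + R * (w - w₀)) (𝓝[<] w₀) (𝓝[<] (w₀ * R)) :=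
    tendsto_affine_nhdsWithin fun w (hw : w < w₀) => by
      simp only [mem_Iio]; nlinarith
  refine (hasDerivWithinAt_of_eventually_eq_affine ?_).derivWithin (uniqueDiffWithinAt_Iio w₀)
  filter_upwards [hwR.eventually hlow] with w ⟨ξ, η, hline, heq⟩
  obtain ⟨b, rfl, rfl⟩ :=
    exists_eq_of_combination_eq hud hqud (hline.trans (by ring : _ = w * R))
  have hR' : R⁻¹ * R = 1 := inv_mul_cancel₀ hR.ne'
  rw [← hb₀]
  apply le_antisymm
  · refine ciSup_le fun b' => ?_
    have hup := weighted_le_add_min_mul hq0 hq1 hF hG hmax (w * R + b' * (u - R))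
      (w * R + b' * (d - R))
    rw [combination_eq hqud, hc₀] at hup
    simp only [Hfun, h₁, h₂]
    linear_combination mul_le_mul_of_nonneg_left hup (inv_pos.2 hR).le +
      min aG aF * (w - w₀) * hR'
  · refine le_trans (le_of_eq ?_) (le_ciSup (hbdd w) b)
    simp only [Hfun, h₁, h₂]
    rw [heq]
    linear_combination -(min aG aF * (w - w₀)) * hR'

end Model

theorem stmt_15_general (R u d p : ℝ) (hd : 0 < d) (hdR : d < R) (hRu : R < u)
    (hp0 : 0 < p) (hp1 : p < 1)
    (q : ℝ) (hq : q = (R - d) / (u - d))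
    (f g : ℝ → ℝ) (Nu Nd : ℕ) (xu xd : ℕ → ℝ)
    (hf : HasSingVals f Nu xu) (hg : HasSingVals g Nd xd)
    (hfnc : ∃ a b : ℝ, f a ≠ f b) (hgnc : ∃ a b : ℝ, g a ≠ g b)
    (w₀ : ℝ) (i j : ℕ) (hi1 : 1 ≤ i) (hiN : i ≤ Nu) (hj1 : 1 ≤ j) (hjN : j ≤ Nd)
    (hmem : (w₀, betaFun R u d p f g w₀) ∈ Cu R u (xu i) ∩ Cd R d (xd j)) :
    lDeriv (Vfun R u d p f g) w₀ =
      min ((1 - p) / (1 - q) * lDeriv g (xd j)) (p / q * lDeriv f (xu i)) := by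
  have hR : 0 < R := hd.trans hdR
  have hq0 : 0 < q := hq ▸ div_pos (by linarith) (by linarith)
  have hq1 : 0 < 1 - q := by
    rw [hq, one_sub_div (by linarith)]
    exact div_pos (by linarith) (by linarith)
  have hqud : q * (u - d) = R - d := by rw [hq]; exact div_mul_cancel₀ _ (by linarith)
  have hH := Hfun_rescale (R := R) (u := u) (d := d) (p := p) (f := f) (g := g) hq0.ne' hq1.ne'
  have hV : Vfun R u d p f g =
      Vfun R u d q (fun z => p / q * f z) (fun z => (1 - p) / (1 - q) * g z) := by
    unfold Vfun; rw [hH]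
  have hβ := bddAbove_Hfun_and_Hfun_betaFun hR hdR hRu hp0 hp1 hf.1 hg.1 hfnc hgnc
  simp only [hH, hV] at hβ
  rw [hV]
  exact lDeriv_Vfun_eq_min hR (by linarith) hq0 hq1 hqud
    ((hf.isConcaveCorner hi1 hiN).const_mul (div_pos hp0 hq0).le)
    ((hg.isConcaveCorner hj1 hjN).const_mul (div_pos (by linarith) hq1).le)
    (fun w => (hβ w).1) (hβ w₀).2 hmem.1 hmem.2

/-- If `(w₀, β(w₀)) ∈ C^u_i ∩ C^d_j` for some `1 ≤ i ≤ Nu`, `1 ≤ j ≤ Nd`,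
then `V'⁻(w₀) = min{ ((1−p)/(1−q)) g'⁻(x^d_j), (p/q) f'⁻(x^u_i) }`, `q = (R−d)/(u−d)`. -/
theorem stmt_15 (R u d p : ℝ) (hd : 0 < d) (hdR : d < R) (hRu : R < u)
    (hp0 : 0 < p) (hp1 : p < 1)
    (q : ℝ) (hq : q = (R - d) / (u - d))
    (f g : ℝ → ℝ) (Nu Nd : ℕ) (xu xd : ℕ → ℝ)
    (hf : HasSingVals f Nu xu) (hg : HasSingVals g Nd xd)
    (hNu : 1 ≤ Nu) (hNd : 1 ≤ Nd)
    (hfnc : ∃ a b : ℝ, f a ≠ f b) (hgnc : ∃ a b : ℝ, g a ≠ g b)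
    (w₀ : ℝ) (i j : ℕ) (hi1 : 1 ≤ i) (hiN : i ≤ Nu) (hj1 : 1 ≤ j) (hjN : j ≤ Nd)
    (hmem : (w₀, betaFun R u d p f g w₀) ∈ Cu R u (xu i) ∩ Cd R d (xd j)) :
    lDeriv (Vfun R u d p f g) w₀ =
      min ((1 - p) / (1 - q) * lDeriv g (xd j)) (p / q * lDeriv f (xu i)) :=
  stmt_15_general R u d p hd hdR hRu hp0 hp1 q hq f g Nu Nd xu xd hf hg hfnc hgnc w₀ i j hi1 hiN hj1
    hjN hmem
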